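/- Let d = 3 and define the local rule f : Fin 3 → Fin 3 → Fin 3 → Fin 3 by f x y z = z if y = 0, f x y z = −z (mod 3, i.e. 0↦0, 1↦2, 2↦1) if y = 1, and f x y z = z + 2 (mod 3) if y = 2 (the 3-state CA rule 102120210102120210102120210). Then for every odd n ≥ 3, the global map F of the n-cell periodic-boundary CA is bijective. -/

import Mathlib

def f11 : Fin 3 → Fin 3 → Fin 3 → Fin 3 :=
  fun _ y z => if y = 0 then z else if y = 1 then -z else z + 2

/-!
The rule reads `F(c)(i) = σ_{c i} (c (i+1))` with `σ_0 = id`, `σ_1 = -·`, `σ_2 = · + 2`, all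
permutations of `Fin 3`. Suppose `F c = F c'`. Knowing `c i = c' i`, the equation at `i`
determines `c (i+1) = c' (i+1)`, so agreeing at one cell means agreeing everywhere.
Otherwise `c i ≠ c' i` for every `i`, and a finite check of the rule shows that either the sums
`c i + c' i` all avoid `2` and follow `s ↦ 1 - s`, or they all equal `2` and `c` follows
`x ↦ 2 - x`. Both maps are involutions, so around a cycle of odd length every value is a fixed
point; the fixed points (`2`, resp. `1`) are exactly the values these cases exclude.
-/

open Function

namespace ZMod

theorem forall_of_imp_succ {n : ℕ} [NeZero n] {P : ZMod n → Prop}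
    (hsucc : ∀ i, P i → P (i + 1)) {j : ZMod n} (hj : P j) (i : ZMod n) : P i := by
  have hP : ∀ k : ℕ, P (j + k) := by
    intro k
    induction k with
    | zero => simpa using hj
    | succ k ih => simpa [add_assoc] using hsucc _ ih
  simpa using hP (i - j).val

end ZMod

theorem Function.Involutive.isFixedPt_of_odd_cycle {α : Type*} {τ : α → α}
    (hτ : Involutive τ) {n : ℕ} (hn : Odd n) {u : ZMod n → α}
    (hu : ∀ i, u (i + 1) = τ (u i)) (i : ZMod n) : IsFixedPt τ (u i) := by
  have hiter : ∀ k : ℕ, u (i + k) = τ^[k] (u i) := by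
    intro k
    induction k with
    | zero => simp
    | succ k ih => rw [Nat.cast_succ, ← add_assoc, hu, ih, iterate_succ_apply']
  have := hiter n
  rw [ZMod.natCast_self, add_zero, hτ.iterate_odd hn] at this
  exact this.symm

section LocalRule

variable {x x' y y' z z' : Fin 3}

theorem f11_right_cancel (h : f11 x y z = f11 x' y' z') (hy : y = y') : z = z' := by
  revert x x' y y' z z'
  decide

theorem f11_sum_of_sum_ne_two (h : f11 x y z = f11 x' y' z') (hy : y ≠ y') (hs : y + y' ≠ 2) :
    z + z' = 1 - (y + y') := by
  revert x x' y y' z z'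
  decide

theorem f11_eq_two_sub_of_sum_eq_two (h : f11 x y z = f11 x' y' z') (hy : y ≠ y')
    (hs : y + y' = 2) (hs' : z + z' = 2) : z = 2 - y := by
  revert x x' y y' z z'
  decide

end LocalRule

theorem stmt_11_general (n : ℕ) (hodd : Odd n) :
    Function.Bijective
      (fun (c : ZMod n → Fin 3) (i : ZMod n) => f11 (c (i - 1)) (c i) (c (i + 1))) := by
  have : NeZero n := ⟨hodd.pos.ne'⟩
  refine Finite.injective_iff_bijective.mp fun c c' h => ?_
  have hF := congrFun h
  by_cases hagree : ∃ j, c j = c' j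
  · obtain ⟨j, hj⟩ := hagree
    exact funext (ZMod.forall_of_imp_succ (fun i hi => f11_right_cancel (hF i) hi) hj)
  push Not at hagree
  exfalso
  by_cases hsum : ∃ j, c j + c' j ≠ 2
  · obtain ⟨j, hj⟩ := hsum
    have hstep : ∀ i, c i + c' i ≠ 2 → c (i + 1) + c' (i + 1) = 1 - (c i + c' i) :=
      fun i hi => f11_sum_of_sum_ne_two (hF i) (hagree i) hi
    have one_sub_eq_two : ∀ s : Fin 3, 1 - s = 2 ↔ s = 2 := by decide
    have one_sub_eq_self : ∀ s : Fin 3, 1 - s = s → s = 2 := by decide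
    have hne : ∀ i, c i + c' i ≠ 2 := ZMod.forall_of_imp_succ
      (fun i hi => by rwa [hstep i hi, Ne, one_sub_eq_two]) hj
    have hinv : Involutive fun s : Fin 3 => 1 - s := sub_sub_cancel 1
    have hfix := hinv.isFixedPt_of_odd_cycle (u := fun i => c i + c' i) hodd
      (fun i => hstep i (hne i)) j
    exact hj (one_sub_eq_self _ hfix)
  · push Not at hsum
    have hinv : Involutive fun a : Fin 3 => 2 - a := sub_sub_cancel 2
    have hstep : ∀ i, c (i + 1) = 2 - c i := fun i =>
      f11_eq_two_sub_of_sum_eq_two (hF i) (hagree i) (hsum i) (hsum (i + 1))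
    have hfix := hinv.isFixedPt_of_odd_cycle hodd hstep 0
    exact hagree 0 (hfix.symm.trans (eq_sub_of_add_eq' (hsum 0)).symm)

theorem stmt_11 (n : ℕ) (hn : 3 ≤ n) (hodd : Odd n) :
    Function.Bijective
      (fun (c : ZMod n → Fin 3) (i : ZMod n) => f11 (c (i - 1)) (c i) (c (i + 1))) :=
  stmt_11_general n hodd
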